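/- Let A be a semiprime unital ring and a ∈ A with len(A/Aa) < ∞ and len(Ran(a)) < ∞. Then len(Ran(a)) ≤ len(A/Aa), with equality if and only if the image of a in A/soc(A) is left invertible. -/

import Mathlib

open MulOpposite Submodule

/-- The length of a module: the supremum of lengths of chains of submodules. -/
noncomputable def mlen (R M : Type*) [Ring R] [AddCommGroup M] [Module R M] : ℕ∞ :=
  WithBot.unbotD 0 (Order.krullDim (Submodule R M))

/-- A ring is semiprime if it has no nonzero nilpotent (two-sided) ideals;
equivalently, `a A a = 0` implies `a = 0`. -/
def IsSemiprimeRing (A : Type*) [Ring A] : Prop :=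
  ∀ a : A, (∀ x : A, a * x * a = 0) → a = 0

/-- The (left) socle of a ring: the sum of all minimal left ideals. -/
noncomputable def socle (A : Type*) [Ring A] : Submodule A A :=
  sSup {m : Submodule A A | IsAtom m}

/-- An element is Fredholm if its image in `A/soc(A)` is invertible. -/
def IsFredholmElem {A : Type*} [Ring A] (a : A) : Prop :=
  ∃ b : A, a * b - 1 ∈ socle A ∧ b * a - 1 ∈ socle A

/-- A left ideal is Fredholm if it contains a Fredholm element. -/
def IsFredholmLeftIdeal {A : Type*} [Ring A] (L : Submodule A A) : Prop :=
  ∃ a ∈ L, IsFredholmElem a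

/-- The right annihilator of a set, as a right ideal (`Aᵐᵒᵖ`-submodule of `A`). -/
def rAnn {A : Type*} [Ring A] (S : Set A) : Submodule Aᵐᵒᵖ A where
  carrier := {a | ∀ s ∈ S, s * a = 0}
  add_mem' := by intro x y hx hy s hs; rw [Set.mem_setOf_eq] at *; rw [mul_add, hx s hs, hy s hs, add_zero]
  zero_mem' := by intro s _; exact mul_zero s
  smul_mem' := by
    intro c x hx s hs
    show s * (c • x) = 0
    rw [MulOpposite.smul_eq_mul_unop, ← mul_assoc, hx s hs, zero_mul]

/-- The left annihilator of a set, as a left ideal. -/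
def lAnn {A : Type*} [Ring A] (S : Set A) : Submodule A A where
  carrier := {a | ∀ s ∈ S, a * s = 0}
  add_mem' := by intro x y hx hy s hs; rw [Set.mem_setOf_eq] at *; rw [add_mul, hx s hs, hy s hs, add_zero]
  zero_mem' := by intro s _; exact zero_mul s
  smul_mem' := by
    intro c x hx s hs
    show c * x * s = 0
    rw [mul_assoc, hx s hs, mul_zero]

/-!
Write `R = Ran(a)`. As `R` has finite length and `A` is semiprime, Brauer's lemma lets us split off
minimal right ideals `eA` one at a time: every right ideal inside `R` is generated by an idempotent,
and `R = eA` with `e` in the socle. Hence `N ↦ lAnn N` and `L ↦ rAnn L` are inverse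
anti-isomorphisms between the right ideals below `R` and the left ideals above `lAnn R ∋ 1 - e`;
on the left this works because a left ideal `L` with `L + soc(A) = A` is a direct summand of `A`,
the socle being a sum of atoms. So `len R = len (A / lAnn R) ≤ len (A / Aa)`, with equality iff
`Aa = lAnn R`, which (as `lAnn R + soc(A) = A`) happens iff `Aa + soc(A) = A`, i.e. iff `[a]` is
left invertible in `A / soc(A)`.
-/

/-- A complement of `b ⊓ s` inside the atomistic element `s` is a complement of `b`. -/
lemma exists_isCompl_of_sup_sSup_atoms_eq_top {α : Type*} [CompleteLattice α]
    [IsModularLattice α] [IsCompactlyGenerated α] {b : α}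
    (h : b ⊔ sSup {a : α | IsAtom a} = ⊤) : ∃ c, IsCompl b c := by
  set s := sSup {a : α | IsAtom a}
  have hs : sSup {a | a ≤ s ∧ IsAtom a} = s := by
    congr 1; ext a; exact ⟨And.right, fun ha => ⟨le_sSup ha, ha⟩⟩
  obtain ⟨t, -, hdisj, hsup, -⟩ := exists_sSupIndep_disjoint_sSup_atoms (b ⊓ s) s inf_le_right hs
  have hts : sSup t ≤ s := hsup ▸ le_sup_right
  refine ⟨sSup t, ⟨?_, ?_⟩⟩
  · rw [disjoint_iff, ← inf_eq_right.2 hts, ← inf_assoc]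
    exact hdisj.eq_bot
  · rw [codisjoint_iff, ← sup_inf_self (a := b) (b := s), sup_assoc, hsup, h]

section Annihilators

variable {A : Type*} [Ring A]

lemma mul_mem_of_mem_op {N : Submodule Aᵐᵒᵖ A} {x : A} (c : A) (hx : x ∈ N) : x * c ∈ N := by
  simpa only [op_smul_eq_mul] using N.smul_mem (op c) hx

lemma mem_span_op_singleton {x y : A} : y ∈ span Aᵐᵒᵖ {x} ↔ ∃ c : A, x * c = y := by
  simp only [mem_span_singleton]
  exact ⟨fun ⟨c, hc⟩ => ⟨c.unop, hc⟩, fun ⟨c, hc⟩ => ⟨op c, hc⟩⟩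

lemma lAnn_anti {S T : Set A} (h : S ⊆ T) : lAnn T ≤ lAnn S := fun _ hx s hs => hx s (h hs)

lemma rAnn_anti {S T : Set A} (h : S ⊆ T) : rAnn T ≤ rAnn S := fun _ hx s hs => hx s (h hs)

lemma subset_lAnn_rAnn (S : Set A) : S ⊆ lAnn (rAnn S : Set A) := fun _ hs _ hx => hx _ hs

lemma subset_rAnn_lAnn (S : Set A) : S ⊆ rAnn (lAnn S : Set A) := fun _ hs _ hx => hx _ hs

lemma rAnn_span_singleton (a : A) : rAnn (span A {a} : Set A) = rAnn {a} := by
  refine le_antisymm (rAnn_anti (subset_span (R := A))) fun x hx s hs => ?_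
  obtain ⟨b, rfl⟩ := mem_span_singleton.1 hs
  rw [smul_eq_mul, mul_assoc, hx a rfl, mul_zero]

lemma rAnn_lAnn_span_op_singleton {g : A} (hg : IsIdempotentElem g) :
    rAnn (lAnn (span Aᵐᵒᵖ {g} : Set A) : Set A) = span Aᵐᵒᵖ {g} := by
  refine le_antisymm (fun x hx => mem_span_op_singleton.2 ⟨x, ?_⟩) (subset_rAnn_lAnn _)
  have hkill : 1 - g ∈ lAnn (span Aᵐᵒᵖ {g} : Set A) := fun s hs => by
    obtain ⟨c, rfl⟩ := mem_span_op_singleton.1 hs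
    rw [← mul_assoc, hg.one_sub_mul_self, zero_mul]
  simpa [sub_mul, sub_eq_zero, eq_comm] using hx _ hkill

/-- Writing `1 = l + c` along the complement, `c` annihilates `L` on the right. -/
lemma lAnn_rAnn_le_of_isCompl {L C : Submodule A A} (h : IsCompl L C) :
    lAnn (rAnn (L : Set A) : Set A) ≤ L := by
  obtain ⟨l, hl, c, hc, hlc⟩ := mem_sup.1 (h.sup_eq_top ▸ mem_top : (1 : A) ∈ L ⊔ C)
  have hcR : c ∈ rAnn (L : Set A) := fun s hs => by
    have hsL : s * c ∈ L := by
      rw [eq_sub_of_add_eq' (by rw [← mul_add, hlc, mul_one] : s * l + s * c = s)]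
      exact sub_mem hs (Ideal.mul_mem_left _ s hl)
    exact (Submodule.disjoint_def.1 h.disjoint) _ hsL (Ideal.mul_mem_left _ s hc)
  intro x hx
  rw [← mul_one x, ← hlc, mul_add, hx c hcR, add_zero]
  exact Ideal.mul_mem_left _ x hl

lemma lAnn_rAnn_of_sup_socle_eq_top {L : Submodule A A} (h : L ⊔ socle A = ⊤) :
    lAnn (rAnn (L : Set A) : Set A) = L := by
  obtain ⟨C, hC⟩ := exists_isCompl_of_sup_sSup_atoms_eq_top h
  exact le_antisymm (lAnn_rAnn_le_of_isCompl hC) (subset_lAnn_rAnn _)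

lemma lAnn_span_op_sup_socle_eq_top {e : A} (he : IsIdempotentElem e) (hes : e ∈ socle A) :
    lAnn (span Aᵐᵒᵖ {e} : Set A) ⊔ socle A = ⊤ := by
  refine (Ideal.eq_top_iff_one _).2 <|
    mem_sup.2 ⟨1 - e, fun s hs => ?_, e, hes, sub_add_cancel 1 e⟩
  obtain ⟨c, rfl⟩ := mem_span_op_singleton.1 hs
  rw [← mul_assoc, he.one_sub_mul_self, zero_mul]

lemma span_singleton_sup_eq_top_iff {a : A} {L : Submodule A A} :
    span A {a} ⊔ L = ⊤ ↔ ∃ b : A, b * a - 1 ∈ L := by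
  rw [Ideal.eq_top_iff_one, mem_sup]
  constructor
  · rintro ⟨y, hy, z, hz, hyz⟩
    obtain ⟨b, rfl⟩ := mem_span_singleton.1 hy
    refine ⟨b, ?_⟩
    rw [smul_eq_mul] at hyz
    rw [← hyz, sub_add_cancel_left]
    exact neg_mem hz
  · rintro ⟨b, hb⟩
    exact ⟨b * a, mem_span_singleton.2 ⟨b, rfl⟩, -(b * a - 1), neg_mem hb, by abel⟩

lemma height_eq_coheight_lAnn {R : Submodule Aᵐᵒᵖ A}
    (hR : ∀ N ≤ R, rAnn (lAnn (N : Set A) : Set A) = N)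
    (hL : ∀ L, lAnn (R : Set A) ≤ L → lAnn (rAnn (L : Set A) : Set A) = L) :
    Order.height R = Order.coheight (lAnn (R : Set A)) := by
  let e : Set.Iic R ≃ (Set.Ici (lAnn (R : Set A)))ᵒᵈ :=
    { toFun N := OrderDual.toDual ⟨lAnn (N : Set A), lAnn_anti N.2⟩
      invFun L := ⟨rAnn ((OrderDual.ofDual L).1 : Set A),
        (rAnn_anti (OrderDual.ofDual L).2).trans (hR R le_rfl).le⟩
      left_inv N := Subtype.ext (hR _ N.2)
      right_inv L := Subtype.ext (hL _ (OrderDual.ofDual L).2) }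
  have iso := e.toOrderIso (fun _ _ h => lAnn_anti h) (fun _ _ h => rAnn_anti h)
  apply WithBot.coe_injective
  rw [Order.height_eq_krullDim_Iic, Order.coheight_eq_krullDim_Ici,
    Order.krullDim_eq_of_orderIso iso, Order.krullDim_orderDual]

end Annihilators

section Idempotents

variable {A : Type*} [Ring A]

lemma eq_span_op_sup_inf_rAnn {e : A} (he : IsIdempotentElem e) {M : Submodule Aᵐᵒᵖ A}
    (heM : e ∈ M) : M = span Aᵐᵒᵖ {e} ⊔ (M ⊓ rAnn {e}) := by
  refine le_antisymm (fun x hx => ?_) (sup_le ((span_singleton_le_iff_mem _ _).2 heM) inf_le_left)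
  have hx' : x - e * x ∈ rAnn {e} := by
    rintro _ rfl
    rw [mul_sub, ← mul_assoc, he.eq, sub_self]
  exact mem_sup.2 ⟨e * x, mem_span_op_singleton.2 ⟨x, rfl⟩, x - e * x,
    mem_inf.2 ⟨sub_mem hx (mul_mem_of_mem_op x heM), hx'⟩, add_sub_cancel _ _⟩

lemma span_op_add_sub_mul {e g : A} (he : IsIdempotentElem e) (hg : IsIdempotentElem g)
    (heg : e * g = 0) :
    IsIdempotentElem (e + g - g * e) ∧
      span Aᵐᵒᵖ {e + g - g * e} = span Aᵐᵒᵖ {e} ⊔ span Aᵐᵒᵖ {g} := by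
  set h := e + g - g * e
  have hhe : h * e = e := by
    simp only [h, sub_mul, add_mul, he.eq, mul_assoc, add_sub_cancel_right]
  have hhg : h * g = g := by
    simp only [h, sub_mul, add_mul, heg, hg.eq, mul_assoc, mul_zero, sub_zero, zero_add]
  refine ⟨by rw [IsIdempotentElem, mul_sub, mul_add, hhe, hhg, ← mul_assoc, hhg], ?_⟩
  refine le_antisymm ((span_singleton_le_iff_mem _ _).2 ?_) (sup_le ?_ ?_)
  · rw [show h = e * 1 + g * (1 - e) by simp only [h, mul_one, mul_sub]; abel]
    exact add_mem (mem_sup_left (mul_mem_of_mem_op 1 (mem_span_singleton_self e)))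
      (mem_sup_right (mul_mem_of_mem_op _ (mem_span_singleton_self g)))
  · exact (span_singleton_le_iff_mem _ _).2 (mem_span_op_singleton.2 ⟨e, hhe⟩)
  · exact (span_singleton_le_iff_mem _ _).2 (mem_span_op_singleton.2 ⟨g, hhg⟩)

end Idempotents

namespace IsSemiprimeRing

variable {A : Type*} [Ring A]

lemma exists_mul_mul_ne_zero (hA : IsSemiprimeRing A) {x : A} (hx : x ≠ 0) :
    ∃ c, x * c * x ≠ 0 := by
  by_contra! h
  exact hx (hA x h)

lemma exists_isIdempotentElem_eq_span_op (hA : IsSemiprimeRing A) {N : Submodule Aᵐᵒᵖ A}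
    (hN : IsAtom N) : ∃ e, IsIdempotentElem e ∧ N = span Aᵐᵒᵖ {e} := by
  obtain ⟨n, hn, hn0⟩ := exists_mem_ne_zero_of_ne_bot hN.1
  obtain ⟨c, hc⟩ := hA.exists_mul_mul_ne_zero hn0
  set m := n * c
  have hmN : m ∈ N := mul_mem_of_mem_op c hn
  let mulLeft : A →ₗ[Aᵐᵒᵖ] A := DistribSMul.toLinearMap Aᵐᵒᵖ A m
  have hmul : N.map mulLeft = N := by
    refine (hN.le_iff.1 ?_).resolve_left fun h => hc ?_
    · rintro _ ⟨x, hx, rfl⟩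
      exact mul_mem_of_mem_op x hmN
    · exact (mem_bot _).1 (h ▸ mem_map_of_mem (f := mulLeft) hn)
  have hker : N ⊓ rAnn {m} = ⊥ := (hN.le_iff.1 inf_le_left).resolve_right fun h =>
    hc ((h.symm ▸ hn : n ∈ N ⊓ rAnn {m}).2 m rfl)
  obtain ⟨e, heN, hme⟩ := mem_map.1 (hmul.symm ▸ hmN : m ∈ N.map mulLeft)
  change m * e = m at hme
  have he : IsIdempotentElem e := by
    have hmem : e * e - e ∈ N ⊓ rAnn {m} := by
      refine ⟨sub_mem (mul_mem_of_mem_op e heN) heN, ?_⟩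
      rintro _ rfl
      rw [mul_sub, ← mul_assoc, hme, hme, sub_self]
    rwa [hker, mem_bot, sub_eq_zero] at hmem
  refine ⟨e, he, ((hN.le_iff.1 ((span_singleton_le_iff_mem _ _).2 heN)).resolve_left ?_).symm⟩
  rw [span_singleton_eq_bot]
  rintro rfl
  exact hc (by rw [← hme, mul_zero, zero_mul])

/-- Minimality of `eA` makes `eAe` a division ring. -/
lemma exists_mul_eq_of_isAtom_span_op {e q : A} (he : IsIdempotentElem e)
    (hN : IsAtom (span Aᵐᵒᵖ {e})) (heq : e * q = q) (hqe : q * e = q) (hq : q ≠ 0) :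
    ∃ v, v * q = e := by
  have exists_right_inv : ∀ q, e * q = q → q * e = q → q ≠ 0 →
      ∃ v, e * v = v ∧ v * e = v ∧ q * v = e := by
    intro q heq hqe hq
    have hle : span Aᵐᵒᵖ {q} ≤ span Aᵐᵒᵖ {e} :=
      (span_singleton_le_iff_mem _ _).2 (mem_span_op_singleton.2 ⟨q, heq⟩)
    have hspan := (hN.le_iff.1 hle).resolve_left (by rwa [span_singleton_eq_bot])
    obtain ⟨u, hu⟩ := mem_span_op_singleton.1 (hspan ▸ mem_span_singleton_self e)
    refine ⟨e * u * e, by simp only [← mul_assoc, he.eq], by rw [mul_assoc, he.eq], ?_⟩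
    rw [← mul_assoc, ← mul_assoc, hqe, hu, he.eq]
  obtain ⟨v, hev, hve, hqv⟩ := exists_right_inv q heq hqe hq
  have he0 : e ≠ 0 := by
    rintro rfl
    exact hN.1 (span_singleton_eq_bot.2 rfl)
  obtain ⟨u, heu, -, hvu⟩ :=
    exists_right_inv v hev hve fun h => he0 (by rw [← hqv, h, mul_zero])
  refine ⟨v, ?_⟩
  rwa [show q = u by rw [← hqe, ← hvu, ← mul_assoc, hqv, heu]]

lemma isAtom_span_of_isAtom_span_op (hA : IsSemiprimeRing A) {e : A} (he : IsIdempotentElem e)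
    (hN : IsAtom (span Aᵐᵒᵖ {e})) : IsAtom (span A {e}) := by
  refine ⟨fun h => hN.1 ?_, fun L hL => ?_⟩
  · rw [span_singleton_eq_bot] at h ⊢
    exact h
  by_contra hL0
  obtain ⟨x, hxL, hx0⟩ := exists_mem_ne_zero_of_ne_bot hL0
  have hxe : x * e = x := by
    obtain ⟨b, hb⟩ := mem_span_singleton.1 (hL.le hxL)
    rw [← hb, smul_eq_mul, mul_assoc, he.eq]
  obtain ⟨c, hc⟩ := hA.exists_mul_mul_ne_zero hx0
  have hxq : x * (e * c * x) = x * c * x := by rw [← mul_assoc, ← mul_assoc, hxe]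
  obtain ⟨v, hv⟩ := exists_mul_eq_of_isAtom_span_op (q := e * c * x) he hN
    (by rw [← mul_assoc, ← mul_assoc, he.eq]) (by rw [mul_assoc, hxe])
    fun h => hc (by rw [← hxq, h, mul_zero])
  have heL : e ∈ L := by
    rw [← hv, ← mul_assoc]
    exact Ideal.mul_mem_left _ _ hxL
  exact hL.not_ge ((span_singleton_le_iff_mem _ _).2 heL)

lemma mem_socle_of_isAtom_span_op (hA : IsSemiprimeRing A) {e : A} (he : IsIdempotentElem e)
    (hN : IsAtom (span Aᵐᵒᵖ {e})) : e ∈ socle A := by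
  have : span A {e} ≤ socle A := le_sSup (hA.isAtom_span_of_isAtom_span_op he hN)
  exact this (mem_span_singleton_self e)

/-- Split off a minimal right ideal `eA` of `M` and induct on the rest, `M ∩ (1 - e)A`. -/
lemma exists_isIdempotentElem_mem_socle_eq_span_op (hA : IsSemiprimeRing A)
    (R : Submodule Aᵐᵒᵖ A) [IsArtinian Aᵐᵒᵖ R] :
    ∃ g, IsIdempotentElem g ∧ g ∈ socle A ∧ R = span Aᵐᵒᵖ {g} := by
  have : WellFoundedLT (Set.Iic R) := (mapIic R).symm.strictMono.wellFoundedLT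
  suffices ∀ M : Set.Iic R, ∃ g, IsIdempotentElem g ∧ g ∈ socle A ∧ M.1 = span Aᵐᵒᵖ {g}
    from this ⊤
  intro M
  induction M using WellFoundedLT.induction with | _ M ih => ?_
  obtain hM | ⟨E, hE, hEM⟩ := eq_bot_or_exists_atom_le M
  · exact ⟨0, .zero, zero_mem _, by simp [hM]⟩
  replace hE := hE.of_isAtom_coe_Iic
  obtain ⟨e, he, hEe⟩ := hA.exists_isIdempotentElem_eq_span_op hE
  rw [hEe] at hE
  have hes : e ∈ socle A := hA.mem_socle_of_isAtom_span_op he hE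
  have heM : e ∈ M.1 := hEM (hEe ▸ mem_span_singleton_self e : e ∈ E.1)
  have he0 : e ≠ 0 := by
    rintro rfl
    exact hE.1 (span_singleton_eq_bot.2 rfl)
  let M' : Set.Iic R := ⟨M.1 ⊓ rAnn {e}, (inf_le_left : M.1 ⊓ rAnn {e} ≤ M.1).trans M.2⟩
  have hlt : M' < M := inf_le_left.lt_of_ne fun h => he0 <| by
    simpa [he.eq] using (h.symm ▸ heM : e ∈ M.1 ⊓ rAnn {e}).2 e rfl
  obtain ⟨g, hg, hgs, hMg⟩ := ih M' hlt
  have hgM' : g ∈ M'.1 := hMg ▸ mem_span_singleton_self g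
  have heg : e * g = 0 := (mem_inf.1 hgM').2 e rfl
  obtain ⟨hidem, hspan⟩ := span_op_add_sub_mul he hg heg
  refine ⟨_, hidem, sub_mem (add_mem hes hgs) (Ideal.mul_mem_left _ g hes), ?_⟩
  rw [hspan, ← hMg]
  exact eq_span_op_sup_inf_rAnn he heM

end IsSemiprimeRing

lemma mlen_eq_length (R M : Type*) [Ring R] [AddCommGroup M] [Module R M] :
    mlen R M = Module.length R M := by
  rw [mlen, ← Module.coe_length, WithBot.unbotD_coe]

theorem stmt16_general (A : Type*) [Ring A] (hA : IsSemiprimeRing A) (a : A)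
    (h2 : mlen Aᵐᵒᵖ (rAnn ({a} : Set A)) ≠ ⊤) :
    mlen Aᵐᵒᵖ (rAnn ({a} : Set A)) ≤ mlen A (A ⧸ Submodule.span A {a}) ∧
      (mlen Aᵐᵒᵖ (rAnn ({a} : Set A)) = mlen A (A ⧸ Submodule.span A {a}) ↔
        ∃ b : A, b * a - 1 ∈ socle A) := by
  set R := rAnn ({a} : Set A)
  rw [mlen_eq_length] at h2
  have : IsArtinian Aᵐᵒᵖ R :=
    (isFiniteLength_iff_isNoetherian_isArtinian.1 (Module.length_ne_top_iff.1 h2)).2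
  simp only [mlen_eq_length, Module.length_submodule, Module.length_quotient] at h2 ⊢
  obtain ⟨e, he, hes, hRe⟩ := hA.exists_isIdempotentElem_mem_socle_eq_span_op R
  have hsoc : lAnn (R : Set A) ⊔ socle A = ⊤ := hRe ▸ lAnn_span_op_sup_socle_eq_top he hes
  have hRL : Order.height R = Order.coheight (lAnn (R : Set A)) := by
    refine height_eq_coheight_lAnn (fun N hN => ?_)
      fun L hL => lAnn_rAnn_of_sup_socle_eq_top (top_unique (hsoc ▸ sup_le_sup_right hL _))
    have := isArtinian_of_le hN
    obtain ⟨g, hg, -, rfl⟩ := hA.exists_isIdempotentElem_mem_socle_eq_span_op N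
    exact rAnn_lAnn_span_op_singleton hg
  have hle : span A {a} ≤ lAnn (R : Set A) :=
    (span_singleton_le_iff_mem _ _).2 (subset_lAnn_rAnn _ rfl)
  rw [hRL, ← span_singleton_sup_eq_top_iff]
  refine ⟨Order.coheight_anti hle, fun h => ?_, fun h => ?_⟩
  · rwa [hle.eq_of_not_lt fun hlt => (Order.coheight_strictAnti hlt (hRL ▸ h2).lt_top).ne h]
  · rw [← lAnn_rAnn_of_sup_socle_eq_top h, rAnn_span_singleton]

theorem stmt16 (A : Type*) [Ring A] (hA : IsSemiprimeRing A) (a : A)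
    (h1 : mlen A (A ⧸ Submodule.span A {a}) ≠ ⊤)
    (h2 : mlen Aᵐᵒᵖ (rAnn ({a} : Set A)) ≠ ⊤) :
    mlen Aᵐᵒᵖ (rAnn ({a} : Set A)) ≤ mlen A (A ⧸ Submodule.span A {a}) ∧
      (mlen Aᵐᵒᵖ (rAnn ({a} : Set A)) = mlen A (A ⧸ Submodule.span A {a}) ↔
        ∃ b : A, b * a - 1 ∈ socle A) :=
  stmt16_general A hA a h2
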